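/- Suppose f(x) = (1/n) Σ_{i=1}^n f_i(x) is β-smooth, each f_i is differentiable with ‖∇f_i(x)‖ ≤ σ for all i and x, and p < 1. Let ĝ(x) = g(x)/(1-p) with g(x) = (1/n) Σ_{i=1}^{n/c} Y_i g[i](x), g[i](x) = Σ_{j=1}^c ∇f_{c(i-1)+j}(x), where the Y_i are the block non-straggler indicators induced by a uniformly random r-subset of k workers partitioned into n/c blocks of size ℓ = kc/n (2ℓ ≤ k). Then the single step x' = x - ((1-p)/β) ĝ(x) satisfies E[f(x')] ≤ f(x) - ((1-p)/(2β))‖∇f(x)‖² + (q-p)cσ²/(2βn), where p, q satisfy E[Y_i] = 1-p and E[Y_i Y_j] = 1-q for i ≠ j, and the expectation is over the random non-straggler set. -/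

import Mathlib

open Finset

/-- Uniform expectation over all `r`-element subsets of the `k` workers. -/
noncomputable def unifExp (k r : ℕ) (X : Finset (Fin k) → ℝ) : ℝ :=
  (∑ S ∈ Finset.powersetCard r (Finset.univ : Finset (Fin k)), X S) / (k.choose r : ℝ)

/-- The index `c*(i-1)+j` (0-indexed: `c*i + j`) of the `j`-th task in the `i`-th block. -/
def taskIdx (n c : ℕ) (hc : c ∣ n) (i : Fin (n / c)) (j : Fin c) : Fin n :=
  ⟨c * i.val + j.val, by
    calc c * i.val + j.val < c * i.val + c := Nat.add_lt_add_left j.isLt _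
      _ = c * (i.val + 1) := (Nat.mul_succ c i.val).symm
      _ ≤ c * (n / c) := Nat.mul_le_mul (Nat.le_refl c) i.isLt
      _ = n := Nat.mul_div_cancel' hc⟩

/-!
With `gᵢ` the `i`-th block gradient scaled by `1/n`, the step is `x - β⁻¹ G` where
`G = ∑ᵢ Yᵢ gᵢ` and `∇F x = ∑ᵢ gᵢ`. Smoothness bounds `F (x - β⁻¹ G)` by
`F x - β⁻¹ ⟪∇F x, G⟫ + (2β)⁻¹ ‖G‖²`. Averaging over the non-straggler set, the first moments give
`𝔼 ⟪∇F x, G⟫ = (1 - p) ‖∇F x‖²` and the second moments (with `Yᵢ² = Yᵢ`) give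
`𝔼 ‖G‖² = (1 - q) ‖∇F x‖² + (q - p) ∑ᵢ ‖gᵢ‖²`. As `YᵢYⱼ ≤ Yᵢ` and `2ℓ ≤ k` forces at least two
blocks, `p ≤ q`, so the term `(p - q) ‖∇F x‖² / (2β)` can be dropped, and `∑ᵢ ‖gᵢ‖² ≤ cσ²/n`.
-/

open scoped BigOperators RealInnerProductSpace

section Gradient

variable {ι E : Type*} [Fintype ι] [NormedAddCommGroup E] [InnerProductSpace ℝ E] [CompleteSpace E]

theorem HasGradientAt.const_mul_sum {f : ι → E → ℝ} {f' : ι → E} {x : E} (a : ℝ)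
    (hf : ∀ i, HasGradientAt (f i) (f' i) x) :
    HasGradientAt (fun y => a * ∑ i, f i y) (a • ∑ i, f' i) x := by
  rw [hasGradientAt_iff_hasFDerivAt, map_smul, map_sum]
  exact (HasFDerivAt.fun_sum fun i _ => (hf i).hasFDerivAt).const_mul a

theorem gradient_const_mul_sum {f : ι → E → ℝ} {x : E} (a : ℝ)
    (hf : ∀ i, DifferentiableAt ℝ (f i) x) :
    gradient (fun y => a * ∑ i, f i y) x = a • ∑ i, gradient (f i) x :=
  (HasGradientAt.const_mul_sum a fun i => (hf i).hasGradientAt).gradient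

end Gradient

theorem sum_eq_sum_sum_taskIdx {M : Type*} [AddCommMonoid M] {n c : ℕ} (hc : c ∣ n)
    (v : Fin n → M) :
    ∑ t, v t = ∑ i : Fin (n / c), ∑ j : Fin c, v (taskIdx n c hc i j) := by
  rw [← Fin.sum_congr' v (Nat.div_mul_cancel hc), ← finProdFinEquiv.sum_comp,
    Fintype.sum_prod_type]
  refine sum_congr rfl fun i _ => sum_congr rfl fun j _ => congrArg v (Fin.ext ?_)
  simp only [finProdFinEquiv, Equiv.coe_fn_mk, Fin.cast_mk, taskIdx]
  ring

theorem sum_norm_sum_sq_le {ι κ E : Type*} [Fintype ι] [Fintype κ] [SeminormedAddCommGroup E]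
    {g : ι → κ → E} {σ : ℝ} (hg : ∀ i j, ‖g i j‖ ≤ σ) :
    ∑ i, ‖∑ j, g i j‖ ^ 2 ≤ Fintype.card ι * (Fintype.card κ * σ) ^ 2 := by
  have hblock (i : ι) : ‖∑ j, g i j‖ ≤ Fintype.card κ * σ := by
    simpa using norm_sum_le_of_le univ fun j _ => hg i j
  simpa using sum_le_card_nsmul univ _ _ fun i _ => pow_le_pow_left₀ (norm_nonneg _) (hblock i) 2

theorem unifExp_eq_expect (k r : ℕ) (X : Finset (Fin k) → ℝ) :
    unifExp k r X = 𝔼 S ∈ powersetCard r univ, X S := by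
  rw [unifExp, expect_eq_sum_div_card, card_powersetCard, card_univ, Fintype.card_fin]

section Descent

variable {Ω ι E : Type*} [Fintype ι] [NormedAddCommGroup E] [InnerProductSpace ℝ E]
  {s : Finset Ω} {Y : ι → Ω → ℝ}

theorem expect_inner_sum_smul {a : ℝ} (hY : ∀ i, 𝔼 ω ∈ s, Y i ω = a) (u : E) (g : ι → E) :
    𝔼 ω ∈ s, ⟪u, ∑ i, Y i ω • g i⟫ = a * ⟪u, ∑ i, g i⟫ := by
  simp_rw [inner_sum, real_inner_smul_right]
  rw [expect_sum_comm, mul_sum]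
  exact sum_congr rfl fun i _ => by rw [← expect_mul, hY]

theorem expect_norm_sum_smul_sq [DecidableEq ι] {a b : ℝ}
    (hY : ∀ i j, 𝔼 ω ∈ s, Y i ω * Y j ω = if i = j then a else b) (g : ι → E) :
    𝔼 ω ∈ s, ‖∑ i, Y i ω • g i‖ ^ 2 = b * ‖∑ i, g i‖ ^ 2 + (a - b) * ∑ i, ‖g i‖ ^ 2 := by
  have hexpand (w : ι → ℝ) : ‖∑ i, w i • g i‖ ^ 2 = ∑ i, ∑ j, w i * w j * ⟪g i, g j⟫ := by
    simp_rw [← real_inner_self_eq_norm_sq, sum_inner, inner_sum, real_inner_smul_left,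
      real_inner_smul_right, mul_assoc]
  have hdiag : ∑ i, ‖g i‖ ^ 2 = ∑ i, ∑ j, if i = j then ⟪g i, g j⟫ else 0 := by simp
  simp_rw [hexpand, expect_sum_comm, ← expect_mul, hY, hdiag, ← real_inner_self_eq_norm_sq,
    sum_inner, inner_sum, mul_sum, ← sum_add_distrib]
  refine sum_congr rfl fun i _ => sum_congr rfl fun j _ => ?_
  split_ifs <;> ring

theorem upper_quadratic_sub_inv_smul {F : E → ℝ} {x u : E} {β : ℝ} (hβ : 0 < β)
    (hF : ∀ y, F y ≤ F x + ⟪u, y - x⟫ + β / 2 * ‖y - x‖ ^ 2) (v : E) :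
    F (x - β⁻¹ • v) ≤ F x - β⁻¹ * ⟪u, v⟫ + (2 * β)⁻¹ * ‖v‖ ^ 2 := by
  have hnorm : ‖β⁻¹ • v‖ ^ 2 = β⁻¹ ^ 2 * ‖v‖ ^ 2 := by
    rw [norm_smul, mul_pow, Real.norm_of_nonneg (inv_nonneg.mpr hβ.le)]
  have h := hF (x - β⁻¹ • v)
  rw [sub_sub_cancel_left, inner_neg_right, norm_neg, real_inner_smul_right, hnorm] at h
  have hquad : β / 2 * (β⁻¹ ^ 2 * ‖v‖ ^ 2) = (2 * β)⁻¹ * ‖v‖ ^ 2 := by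
    field_simp
  linarith

theorem expect_apply_sub_inv_smul_sum_le [DecidableEq ι] (hs : s.Nonempty) {F : E → ℝ} {x : E}
    {g : ι → E} {β p q : ℝ} (hβ : 0 < β)
    (hF : ∀ y, F y ≤ F x + ⟪∑ i, g i, y - x⟫ + β / 2 * ‖y - x‖ ^ 2)
    (hY₁ : ∀ i, 𝔼 ω ∈ s, Y i ω = 1 - p)
    (hY₂ : ∀ i j, 𝔼 ω ∈ s, Y i ω * Y j ω = if i = j then 1 - p else 1 - q) (hpq : p ≤ q) :
    𝔼 ω ∈ s, F (x - β⁻¹ • ∑ i, Y i ω • g i)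
      ≤ F x - (1 - p) / (2 * β) * ‖∑ i, g i‖ ^ 2 + (q - p) / (2 * β) * ∑ i, ‖g i‖ ^ 2 := by
  calc 𝔼 ω ∈ s, F (x - β⁻¹ • ∑ i, Y i ω • g i)
      ≤ 𝔼 ω ∈ s, (F x - β⁻¹ * ⟪∑ i, g i, ∑ i, Y i ω • g i⟫
          + (2 * β)⁻¹ * ‖∑ i, Y i ω • g i‖ ^ 2) :=
        expect_le_expect fun ω _ => upper_quadratic_sub_inv_smul hβ hF _
    _ = F x - (1 - p) / (2 * β) * ‖∑ i, g i‖ ^ 2 + (q - p) / (2 * β) * ∑ i, ‖g i‖ ^ 2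
          - (q - p) / (2 * β) * ‖∑ i, g i‖ ^ 2 := by
        rw [expect_add_distrib, expect_sub_distrib, expect_const hs, ← mul_expect, ← mul_expect,
          expect_inner_sum_smul hY₁, expect_norm_sum_smul_sq hY₂, real_inner_self_eq_norm_sq]
        ring
    _ ≤ _ := sub_le_self _ (by have := sub_nonneg.mpr hpq; positivity)

end Descent

section Indicators

variable {Ω ι : Type*} {s : Finset Ω} {P : ι → Ω → Prop} [∀ i ω, Decidable (P i ω)] {p q : ℝ}

theorem le_of_expect_ite_mul_ite (hp : ∀ i, 𝔼 ω ∈ s, (if P i ω then (1 : ℝ) else 0) = 1 - p)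
    (hq : ∀ i j, i ≠ j →
      𝔼 ω ∈ s, (if P i ω then (1 : ℝ) else 0) * (if P j ω then (1 : ℝ) else 0) = 1 - q)
    {i j : ι} (hij : i ≠ j) : p ≤ q := by
  have hle : 𝔼 ω ∈ s, (if P i ω then (1 : ℝ) else 0) * (if P j ω then (1 : ℝ) else 0)
      ≤ 𝔼 ω ∈ s, (if P i ω then (1 : ℝ) else 0) :=
    expect_le_expect fun ω _ => by split_ifs <;> norm_num
  rw [hq i j hij, hp i] at hle
  linarith

theorem expect_ite_mul_ite_eq [DecidableEq ι]
    (hp : ∀ i, 𝔼 ω ∈ s, (if P i ω then (1 : ℝ) else 0) = 1 - p)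
    (hq : ∀ i j, i ≠ j →
      𝔼 ω ∈ s, (if P i ω then (1 : ℝ) else 0) * (if P j ω then (1 : ℝ) else 0) = 1 - q)
    (i j : ι) :
    𝔼 ω ∈ s, (if P i ω then (1 : ℝ) else 0) * (if P j ω then (1 : ℝ) else 0)
      = if i = j then 1 - p else 1 - q := by
  split_ifs with hij
  · subst hij
    rw [← hp i]
    exact expect_congr rfl fun ω _ => by split_ifs <;> norm_num
  · exact hq i j hij

end Indicators

theorem pos_of_expect_ite_inter_nonempty_ne_zero {k : ℕ} {s : Finset (Finset (Fin k))}
    {T : Finset (Fin k)} (h : 𝔼 S ∈ s, (if (S ∩ T).Nonempty then (1 : ℝ) else 0) ≠ 0) :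
    0 < k := by
  by_contra! hk
  obtain rfl : k = 0 := by omega
  simp [eq_empty_of_isEmpty] at h

theorem two_le_div_of_two_mul_le {n c k ℓ : ℕ} (hn : 0 < n) (hc : c ∣ n)
    (hℓ : ℓ = k * c / n) (h2ℓ : 2 * ℓ ≤ k) (hk : 0 < k) : 2 ≤ n / c := by
  have hpos : 0 < n / c := Nat.div_pos (Nat.le_of_dvd hn hc) (Nat.pos_of_dvd_of_pos hc hn)
  by_contra h
  have hcn : n / c * c = n := Nat.div_mul_cancel hc
  rw [show n / c = 1 by omega, one_mul] at hcn
  subst hcn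
  rw [Nat.mul_div_cancel _ hn] at hℓ
  omega

theorem sum_norm_sum_smul_taskIdx_sq_le {E : Type*} [SeminormedAddCommGroup E] [NormedSpace ℝ E]
    {n c : ℕ} (hc : c ∣ n) {v : Fin n → E} {σ : ℝ} (hv : ∀ t, ‖v t‖ ≤ σ) :
    ∑ i : Fin (n / c), ‖∑ j : Fin c, (1 / (n : ℝ)) • v (taskIdx n c hc i j)‖ ^ 2
      ≤ c * σ ^ 2 / n := by
  have hterm (i : Fin (n / c)) (j : Fin c) : ‖(1 / (n : ℝ)) • v (taskIdx n c hc i j)‖ ≤ σ / n := by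
    rw [norm_smul, one_div, norm_inv, RCLike.norm_natCast, ← div_eq_inv_mul]
    gcongr
    exact hv _
  have hcast : ((n / c : ℕ) : ℝ) * c = n := by exact_mod_cast Nat.div_mul_cancel hc
  calc _ ≤ _ := sum_norm_sum_sq_le hterm
    _ = ((n / c : ℕ) : ℝ) * c * (c * σ ^ 2 / n ^ 2) := by simp only [Fintype.card_fin]; ring
    _ = c * σ ^ 2 / n := by rw [hcast]; field_simp

theorem erasurehead_one_step_descent_general {d n k c r ℓ : ℕ} (hn : 0 < n) (hc : c ∣ n)
    (hr : r ≤ k) (hℓ : ℓ = k * c / n) (h2ℓ : 2 * ℓ ≤ k)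
    (W : Fin (n / c) → Finset (Fin k))
    (f : Fin n → EuclideanSpace ℝ (Fin d) → ℝ)
    (hdiff : ∀ i, Differentiable ℝ (f i))
    (σ β : ℝ) (hβ : 0 < β)
    (hσ : ∀ i x, ‖gradient (f i) x‖ ≤ σ)
    (F : EuclideanSpace ℝ (Fin d) → ℝ)
    (hF : F = fun y => (1 / (n : ℝ)) * ∑ i, f i y)
    (hsmooth : ∀ x y, F y ≤ F x + inner ℝ (gradient F x) (y - x) + (β / 2) * ‖y - x‖ ^ 2)
    (p q : ℝ) (hp1 : p < 1)
    (hEp : ∀ i, unifExp k r (fun S => if (S ∩ W i).Nonempty then (1 : ℝ) else 0) = 1 - p)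
    (hEq : ∀ i j, i ≠ j →
      unifExp k r (fun S =>
        (if (S ∩ W i).Nonempty then (1 : ℝ) else 0) *
          (if (S ∩ W j).Nonempty then (1 : ℝ) else 0)) = 1 - q)
    (x : EuclideanSpace ℝ (Fin d)) :
    unifExp k r (fun S =>
        F (x - ((1 - p) / β) • ((1 - p)⁻¹ •
          ((1 / (n : ℝ)) • ∑ i : Fin (n / c),
            (if (S ∩ W i).Nonempty then (1 : ℝ) else 0) •
              ∑ j : Fin c, gradient (f (taskIdx n c hc i j)) x))))
      ≤ F x - ((1 - p) / (2 * β)) * ‖gradient F x‖ ^ 2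
        + (q - p) * c * σ ^ 2 / (2 * β * n) := by
  simp only [unifExp_eq_expect] at hEp hEq ⊢
  set g : Fin (n / c) → Fin c → EuclideanSpace ℝ (Fin d) :=
    fun i j => (1 / (n : ℝ)) • gradient (f (taskIdx n c hc i j)) x
  have hone : 0 < n / c := Nat.div_pos (Nat.le_of_dvd hn hc) (Nat.pos_of_dvd_of_pos hc hn)
  have hk := pos_of_expect_ite_inter_nonempty_ne_zero (by linarith [hEp ⟨0, hone⟩])
  have htwo := two_le_div_of_two_mul_le hn hc hℓ h2ℓ hk
  have hpq : p ≤ q :=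
    le_of_expect_ite_mul_ite hEp hEq (i := ⟨0, hone⟩) (j := ⟨1, htwo⟩) (by simp)
  have hgrad : gradient F x = ∑ i, ∑ j, g i j := by
    rw [hF, gradient_const_mul_sum _ fun i => (hdiff i).differentiableAt,
      sum_eq_sum_sum_taskIdx hc, smul_sum]
    simp_rw [smul_sum, g]
  have hstep (S : Finset (Fin k)) : ((1 - p) / β) • ((1 - p)⁻¹ •
      ((1 / (n : ℝ)) • ∑ i : Fin (n / c), (if (S ∩ W i).Nonempty then (1 : ℝ) else 0) •
        ∑ j : Fin c, gradient (f (taskIdx n c hc i j)) x))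
      = β⁻¹ • ∑ i, (if (S ∩ W i).Nonempty then (1 : ℝ) else 0) • ∑ j, g i j := by
    rw [smul_smul, show (1 - p) / β * (1 - p)⁻¹ = β⁻¹ by field_simp [(by linarith : 1 - p ≠ 0)]]
    simp_rw [g, smul_sum, smul_comm (1 / (n : ℝ))]
  simp_rw [hstep]
  refine (expect_apply_sub_inv_smul_sum_le (powersetCard_nonempty.mpr (by simpa)) hβ
    (hgrad ▸ hsmooth x) hEp (expect_ite_mul_ite_eq hEp hEq) hpq).trans ?_
  have hnoise := mul_le_mul_of_nonneg_left (sum_norm_sum_smul_taskIdx_sq_le hc (hσ · x))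
    (div_nonneg (sub_nonneg.mpr hpq) (by positivity) : 0 ≤ (q - p) / (2 * β))
  rw [hgrad]
  linarith [show (q - p) / (2 * β) * (c * σ ^ 2 / n) = (q - p) * c * σ ^ 2 / (2 * β * n) by ring]

/-- One-step descent of ErasureHead with step size `(1-p)/β` on a `β`-smooth function:
`E[f(x')] ≤ f(x) - ((1-p)/(2β))‖∇f(x)‖² + (q-p)cσ²/(2βn)` for the step
`x' = x - ((1-p)/β) ĝ(x)`, where `E[Yᵢ] = 1-p` and `E[YᵢYⱼ] = 1-q` for `i ≠ j`. -/
theorem erasurehead_one_step_descent {d n k c r ℓ : ℕ} (hn : 0 < n) (hc : c ∣ n)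
    (hr : r ≤ k) (hℓ : ℓ = k * c / n) (h2ℓ : 2 * ℓ ≤ k)
    (W : Fin (n / c) → Finset (Fin k))
    (hWcard : ∀ i, (W i).card = ℓ)
    (hWdisj : ∀ i j, i ≠ j → Disjoint (W i) (W j))
    (f : Fin n → EuclideanSpace ℝ (Fin d) → ℝ)
    (hdiff : ∀ i, Differentiable ℝ (f i))
    (σ β : ℝ) (hβ : 0 < β)
    (hσ : ∀ i x, ‖gradient (f i) x‖ ≤ σ)
    (F : EuclideanSpace ℝ (Fin d) → ℝ)
    (hF : F = fun y => (1 / (n : ℝ)) * ∑ i, f i y)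
    (hsmooth : ∀ x y, F y ≤ F x + inner ℝ (gradient F x) (y - x) + (β / 2) * ‖y - x‖ ^ 2)
    (p q : ℝ) (hp1 : p < 1)
    (hEp : ∀ i, unifExp k r (fun S => if (S ∩ W i).Nonempty then (1 : ℝ) else 0) = 1 - p)
    (hEq : ∀ i j, i ≠ j →
      unifExp k r (fun S =>
        (if (S ∩ W i).Nonempty then (1 : ℝ) else 0) *
          (if (S ∩ W j).Nonempty then (1 : ℝ) else 0)) = 1 - q)
    (x : EuclideanSpace ℝ (Fin d)) :
    unifExp k r (fun S =>
        F (x - ((1 - p) / β) • ((1 - p)⁻¹ •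
          ((1 / (n : ℝ)) • ∑ i : Fin (n / c),
            (if (S ∩ W i).Nonempty then (1 : ℝ) else 0) •
              ∑ j : Fin c, gradient (f (taskIdx n c hc i j)) x))))
      ≤ F x - ((1 - p) / (2 * β)) * ‖gradient F x‖ ^ 2
        + (q - p) * c * σ ^ 2 / (2 * β * n) :=
  erasurehead_one_step_descent_general hn hc hr hℓ h2ℓ W f hdiff σ β hβ hσ F hF hsmooth p q hp1 hEp
    hEq x
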